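/- Compositional cut-blur principle: suppose L0 is shared between frames F1 and F2, and every lcut0-run of F2 is an lcut0-run of F1. Let lsrc ⊆ LEFT0 and lobs ⊆ RIGHT2, and let f be a function on sets of lsrc-runs. If F1 f-limits lsrc-to-lcut0 flow, then F2 f-limits lsrc-to-lobs flow. -/
import Mathlib


open scoped Classical

/-- A (static) frame over ambient types of locations, channels and data:
a set `LO` of locations, a set `CH` of channels, sender and recipient
endpoints for channels, and for each location a prefix-closed set of
finite-or-infinite sequences of labels `(c, v)` (represented as functions
`ℕ → Option (Chan × D)` with initial-segment domain). -/
structure Frame (Loc Chan D : Type) where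
  LO : Set Loc
  CH : Set Chan
  sender : Chan → Loc
  recipt : Chan → Loc
  sender_mem : ∀ c ∈ CH, sender c ∈ LO
  recipt_mem : ∀ c ∈ CH, recipt c ∈ LO
  traces : Loc → Set (ℕ → Option (Chan × D))
  traces_dom : ∀ ℓ, ∀ t ∈ traces ℓ, ∀ m n : ℕ, m ≤ n → t n ≠ none → t m ≠ none
  traces_labels : ∀ ℓ, ∀ t ∈ traces ℓ, ∀ n c v, t n = some (c, v) →
    c ∈ CH ∧ (sender c = ℓ ∨ recipt c = ℓ)
  traces_prefix : ∀ ℓ, ∀ t ∈ traces ℓ, ∀ n : ℕ,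
    (fun m => if m < n then t m else none) ∈ traces ℓ

/-- Raw data of a system of events: a carrier set of events with a relation. -/
structure EvStruct (E : Type) where
  carrier : Set E
  rel : E → E → Prop

variable {Loc Chan D E : Type}

/-- `B` is a system of events: `rel` is a partial order on `carrier`, and every
event has only finitely many predecessors. -/
def IsSysEv (B : EvStruct E) : Prop :=
  (∀ a b, B.rel a b → a ∈ B.carrier ∧ b ∈ B.carrier) ∧
  (∀ a ∈ B.carrier, B.rel a a) ∧
  (∀ a b, B.rel a b → B.rel b a → a = b) ∧
  (∀ a b c, B.rel a b → B.rel b c → B.rel a c) ∧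
  (∀ a ∈ B.carrier, {x | B.rel x a}.Finite)

/-- The events of `B` whose channel has `ℓ` as sender or recipient. -/
def evProj (F : Frame Loc Chan D) (chan : E → Chan) (B : EvStruct E) (ℓ : Loc) :
    Set E :=
  {e | e ∈ B.carrier ∧ (F.sender (chan e) = ℓ ∨ F.recipt (chan e) = ℓ)}

/-- The projection of `B` to location `ℓ`, viewed as a sequence of labels: the
`n`-th entry is the label of the event of `evProj F chan B ℓ` having exactly
`n` strict predecessors there. -/
noncomputable def projSeq (F : Frame Loc Chan D) (chan : E → Chan) (msg : E → D)
    (B : EvStruct E) (ℓ : Loc) : ℕ → Option (Chan × D) := fun n =>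
  if h : ∃ e, e ∈ evProj F chan B ℓ ∧
      Set.ncard {e' | e' ∈ evProj F chan B ℓ ∧ B.rel e' e ∧ e' ≠ e} = n
  then some (chan h.choose, msg h.choose)
  else none

/-- `B` is an execution of `F`: a system of events on the channels of `F`
whose projection to each location of `F` is linearly ordered and, viewed as
a sequence, a trace of that location. -/
def IsExec (F : Frame Loc Chan D) (chan : E → Chan) (msg : E → D)
    (B : EvStruct E) : Prop :=
  IsSysEv B ∧ (∀ e ∈ B.carrier, chan e ∈ F.CH) ∧
  ∀ ℓ ∈ F.LO,
    (∀ a ∈ evProj F chan B ℓ, ∀ b ∈ evProj F chan B ℓ, B.rel a b ∨ B.rel b a) ∧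
    projSeq F chan msg B ℓ ∈ F.traces ℓ

/-- Restriction `B|C` of `B` to the events whose channel lies in `C`. -/
def evRestrict (chan : E → Chan) (B : EvStruct E) (C : Set Chan) : EvStruct E where
  carrier := {e | e ∈ B.carrier ∧ chan e ∈ C}
  rel := fun a b => B.rel a b ∧ chan a ∈ C ∧ chan b ∈ C

/-- `lruns C`: the `C`-runs of `F`, i.e. restrictions to `C` of executions. -/
def lruns (F : Frame Loc Chan D) (chan : E → Chan) (msg : E → D) (C : Set Chan) :
    Set (EvStruct E) :=
  {B | ∃ A : EvStruct E, IsExec F chan msg A ∧ evRestrict chan A C = B}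

/-- `J_{C→C'}(B)`: the `C'`-runs compatible with `B`, computed in `F`. -/
def cmpt (F : Frame Loc Chan D) (chan : E → Chan) (msg : E → D)
    (C C' : Set Chan) (B : EvStruct E) : Set (EvStruct E) :=
  {B' | ∃ A : EvStruct E, IsExec F chan msg A ∧
      evRestrict chan A C = B ∧ evRestrict chan A C' = B'}

/-- `L0` is shared between `F1` and `F2`: `L0` lies in the locations of both,
and every `ℓ ∈ L0` has the same channel endpoints and trace set in both. -/
def Shared (F1 F2 : Frame Loc Chan D) (L0 : Set Loc) : Prop :=
  L0 ⊆ F1.LO ∧ L0 ⊆ F2.LO ∧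
  ∀ ℓ ∈ L0,
    ({c | c ∈ F1.CH ∧ F1.sender c = ℓ} = {c | c ∈ F2.CH ∧ F2.sender c = ℓ}) ∧
    ({c | c ∈ F1.CH ∧ F1.recipt c = ℓ} = {c | c ∈ F2.CH ∧ F2.recipt c = ℓ}) ∧
    F1.traces ℓ = F2.traces ℓ

/-- The channels of `F` with both endpoints in `L0`. -/
def LEFT0 (F : Frame Loc Chan D) (L0 : Set Loc) : Set Chan :=
  {c | c ∈ F.CH ∧ F.sender c ∈ L0 ∧ F.recipt c ∈ L0}

/-- The channels of `F` with exactly one endpoint in `L0`. -/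
def lcut0 (F : Frame Loc Chan D) (L0 : Set Loc) : Set Chan :=
  {c | c ∈ F.CH ∧ Xor' (F.sender c ∈ L0) (F.recipt c ∈ L0)}

/-- The channels of `F` with no endpoint in `L0`. -/
def RIGHTchans (F : Frame Loc Chan D) (L0 : Set Loc) : Set Chan :=
  {c | c ∈ F.CH ∧ F.sender c ∉ L0 ∧ F.recipt c ∉ L0}

/-- A blur operator: inclusion, idempotence, and commutation with unions. -/
def IsBlur {α : Type} (f : Set α → Set α) : Prop :=
  (∀ S, S ⊆ f S) ∧ (∀ S, f (f S) = f S) ∧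
  ∀ (ι : Type) (S : ι → Set α), f (⋃ i, S i) = ⋃ i, f (S i)

/-- `F` `f`-limits `lsrc`-to-`lobs` flow: `f` is a blur operator (on sets of
`lsrc`-runs) and every compatibility set `J_{lobs→lsrc}(B_o)` is `f`-blurred. -/
def FLimits (F : Frame Loc Chan D) (chan : E → Chan) (msg : E → D)
    (lsrc lobs : Set Chan) (f : Set (EvStruct E) → Set (EvStruct E)) : Prop :=
  IsBlur f ∧ ∀ B ∈ lruns F chan msg lobs,
    f (cmpt F chan msg lobs lsrc B) = cmpt F chan msg lobs lsrc B

section CutBlurAux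

variable {Loc Chan D E : Type}

lemma evstruct_ext {B C : EvStruct E} (h1 : B.carrier = C.carrier)
    (h2 : B.rel = C.rel) : B = C := by
  cases B; cases C; cases h1; cases h2; rfl

lemma shared_symm {F1 F2 : Frame Loc Chan D} {L0 : Set Loc} (h : Shared F1 F2 L0) :
    Shared F2 F1 L0 :=
  ⟨h.2.1, h.1, fun ℓ hℓ => ⟨((h.2.2 ℓ hℓ).1).symm, ((h.2.2 ℓ hℓ).2.1).symm,
    ((h.2.2 ℓ hℓ).2.2).symm⟩⟩

lemma shared_sender {F1 F2 : Frame Loc Chan D} {L0 : Set Loc} (h : Shared F1 F2 L0)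
    {ℓ : Loc} (hℓ : ℓ ∈ L0) (c : Chan) :
    (c ∈ F1.CH ∧ F1.sender c = ℓ) ↔ (c ∈ F2.CH ∧ F2.sender c = ℓ) :=
  Set.ext_iff.mp (h.2.2 ℓ hℓ).1 c

lemma shared_recipt {F1 F2 : Frame Loc Chan D} {L0 : Set Loc} (h : Shared F1 F2 L0)
    {ℓ : Loc} (hℓ : ℓ ∈ L0) (c : Chan) :
    (c ∈ F1.CH ∧ F1.recipt c = ℓ) ↔ (c ∈ F2.CH ∧ F2.recipt c = ℓ) :=
  Set.ext_iff.mp (h.2.2 ℓ hℓ).2.1 c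

lemma shared_sender' {F1 F2 : Frame Loc Chan D} {L0 : Set Loc} (h : Shared F1 F2 L0)
    {c : Chan} (hc : c ∈ F1.CH) (hs : F1.sender c ∈ L0) :
    c ∈ F2.CH ∧ F2.sender c = F1.sender c :=
  (shared_sender h hs c).mp ⟨hc, rfl⟩

lemma shared_recipt' {F1 F2 : Frame Loc Chan D} {L0 : Set Loc} (h : Shared F1 F2 L0)
    {c : Chan} (hc : c ∈ F1.CH) (hs : F1.recipt c ∈ L0) :
    c ∈ F2.CH ∧ F2.recipt c = F1.recipt c :=
  (shared_recipt h hs c).mp ⟨hc, rfl⟩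

lemma LEFT0_subset_shared {F1 F2 : Frame Loc Chan D} {L0 : Set Loc}
    (h : Shared F1 F2 L0) : LEFT0 F1 L0 ⊆ LEFT0 F2 L0 := by
  rintro c ⟨hc, hs, hr⟩
  obtain ⟨h1, h2⟩ := shared_sender' h hc hs
  obtain ⟨h3, h4⟩ := shared_recipt' h hc hr
  exact ⟨h1, h2 ▸ hs, h4 ▸ hr⟩

lemma LEFT0_shared_eq {F1 F2 : Frame Loc Chan D} {L0 : Set Loc}
    (h : Shared F1 F2 L0) : LEFT0 F1 L0 = LEFT0 F2 L0 :=
  Set.Subset.antisymm (LEFT0_subset_shared h) (LEFT0_subset_shared (shared_symm h))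

lemma lcut0_subset_shared {F1 F2 : Frame Loc Chan D} {L0 : Set Loc}
    (h : Shared F1 F2 L0) : lcut0 F1 L0 ⊆ lcut0 F2 L0 := by
  rintro c ⟨hc, ⟨hs, hr⟩|⟨hr, hs⟩⟩
  · obtain ⟨h1, h2⟩ := shared_sender' h hc hs
    refine ⟨h1, Or.inl ⟨h2 ▸ hs, fun hr2 => ?_⟩⟩
    obtain ⟨_, h4⟩ := shared_recipt' (shared_symm h) h1 hr2
    exact hr (h4 ▸ hr2)
  · obtain ⟨h1, h2⟩ := shared_recipt' h hc hr
    refine ⟨h1, Or.inr ⟨h2 ▸ hr, fun hs2 => ?_⟩⟩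
    obtain ⟨_, h4⟩ := shared_sender' (shared_symm h) h1 hs2
    exact hs (h4 ▸ hs2)

lemma lcut0_shared_eq {F1 F2 : Frame Loc Chan D} {L0 : Set Loc}
    (h : Shared F1 F2 L0) : lcut0 F1 L0 = lcut0 F2 L0 :=
  Set.Subset.antisymm (lcut0_subset_shared h) (lcut0_subset_shared (shared_symm h))

lemma pick_congr (chan : E → Chan) (msg : E → D) {P Q : E → Prop}
    (h : ∀ e, P e ↔ Q e) :
    (if h' : ∃ e, P e then some (chan h'.choose, msg h'.choose) else none) =
    (if h' : ∃ e, Q e then some (chan h'.choose, msg h'.choose) else none) := by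
  have hPQ : P = Q := funext fun e => propext (h e)
  subst hPQ; rfl

lemma projSeq_congr {F F' : Frame Loc Chan D} (chan : E → Chan) (msg : E → D)
    {B B' : EvStruct E} {ℓ : Loc}
    (hS : evProj F chan B ℓ = evProj F' chan B' ℓ)
    (hR : ∀ a ∈ evProj F chan B ℓ, ∀ b ∈ evProj F chan B ℓ,
      (B.rel a b ↔ B'.rel a b)) :
    projSeq F chan msg B ℓ = projSeq F' chan msg B' ℓ := by
  have hSm : ∀ e, e ∈ evProj F chan B ℓ ↔ e ∈ evProj F' chan B' ℓ :=
    fun e => Set.ext_iff.mp hS e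
  have hsets : ∀ e ∈ evProj F chan B ℓ,
      {e' | e' ∈ evProj F chan B ℓ ∧ B.rel e' e ∧ e' ≠ e} =
      {e' | e' ∈ evProj F' chan B' ℓ ∧ B'.rel e' e ∧ e' ≠ e} := by
    intro e he
    ext e'
    simp only [Set.mem_setOf_eq]
    constructor
    · rintro ⟨h1, h2, h3⟩
      exact ⟨(hSm e').mp h1, (hR e' h1 e he).mp h2, h3⟩
    · rintro ⟨h1, h2, h3⟩
      have h1' : e' ∈ evProj F chan B ℓ := (hSm e').mpr h1
      exact ⟨h1', (hR e' h1' e he).mpr h2, h3⟩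
  funext n
  simp only [projSeq]
  refine pick_congr chan msg fun e => ?_
  constructor
  · rintro ⟨he, hn⟩
    exact ⟨(hSm e).mp he, by rw [← hsets e he]; exact hn⟩
  · rintro ⟨he, hn⟩
    have he' := (hSm e).mpr he
    exact ⟨he', by rw [hsets e he']; exact hn⟩

/-- Channels of `Fa` with at least one endpoint in `L0`. -/
def LCset (Fa : Frame Loc Chan D) (L0 : Set Loc) : Set Chan :=
  {c | c ∈ Fa.CH ∧ (Fa.sender c ∈ L0 ∨ Fa.recipt c ∈ L0)}

/-- The splice lemma: given executions `AL` of `Fa` and `AR` of `Fb` that agree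
on the cut, there is an execution of `Fb` agreeing with `AL` on channels inside
`L0` and with `AR` on the cut and on channels outside `L0`. -/
lemma splice (Fa Fb : Frame Loc Chan D) (chan : E → Chan) (msg : E → D)
    (L0 : Set Loc) (hsh : Shared Fa Fb L0)
    (AL AR : EvStruct E)
    (hAL : IsExec Fa chan msg AL) (hAR : IsExec Fb chan msg AR)
    (hcut : evRestrict chan AL (lcut0 Fa L0) = evRestrict chan AR (lcut0 Fa L0)) :
    ∃ A : EvStruct E, IsExec Fb chan msg A ∧
      evRestrict chan A (lcut0 Fa L0) = evRestrict chan AR (lcut0 Fa L0) ∧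
      (∀ C, C ⊆ LEFT0 Fa L0 → evRestrict chan A C = evRestrict chan AL C) ∧
      (∀ C, C ⊆ RIGHTchans Fb L0 → evRestrict chan A C = evRestrict chan AR C) := by
  obtain ⟨hALsys, hALch, hALloc⟩ := hAL
  obtain ⟨hARsys, hARch, hARloc⟩ := hAR
  obtain ⟨hLcar, hLrefl, hLanti, hLtrans, hLfin⟩ := hALsys
  obtain ⟨hRcar, hRrefl, hRanti, hRtrans, hRfin⟩ := hARsys
  set Cut : Set Chan := lcut0 Fa L0 with hCutdef
  set LC : Set Chan := LCset Fa L0 with hLCdef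
  -- channel facts
  have hCutLC : Cut ⊆ LC := by
    rintro c ⟨hc, ⟨h, _⟩|⟨h, _⟩⟩
    exacts [⟨hc, Or.inl h⟩, ⟨hc, Or.inr h⟩]
  have hLC_b : ∀ c, c ∈ LC ↔ (c ∈ Fb.CH ∧ (Fb.sender c ∈ L0 ∨ Fb.recipt c ∈ L0)) := by
    intro c
    constructor
    · rintro ⟨hc, h|h⟩
      · obtain ⟨h1, h2⟩ := shared_sender' hsh hc h
        exact ⟨h1, Or.inl (h2 ▸ h)⟩
      · obtain ⟨h1, h2⟩ := shared_recipt' hsh hc h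
        exact ⟨h1, Or.inr (h2 ▸ h)⟩
    · rintro ⟨hc, h|h⟩
      · obtain ⟨h1, h2⟩ := shared_sender' (shared_symm hsh) hc h
        exact ⟨h1, Or.inl (h2 ▸ h)⟩
      · obtain ⟨h1, h2⟩ := shared_recipt' (shared_symm hsh) hc h
        exact ⟨h1, Or.inr (h2 ▸ h)⟩
  have hend : ∀ ℓ ∈ L0, ∀ c : Chan,
      (c ∈ Fa.CH ∧ (Fa.sender c = ℓ ∨ Fa.recipt c = ℓ)) ↔
      (c ∈ Fb.CH ∧ (Fb.sender c = ℓ ∨ Fb.recipt c = ℓ)) := by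
    intro ℓ hℓ c
    constructor
    · rintro ⟨hc, h|h⟩
      · obtain t := (shared_sender hsh hℓ c).mp ⟨hc, h⟩; exact ⟨t.1, Or.inl t.2⟩
      · obtain t := (shared_recipt hsh hℓ c).mp ⟨hc, h⟩; exact ⟨t.1, Or.inr t.2⟩
    · rintro ⟨hc, h|h⟩
      · obtain t := (shared_sender hsh hℓ c).mpr ⟨hc, h⟩; exact ⟨t.1, Or.inl t.2⟩
      · obtain t := (shared_recipt hsh hℓ c).mpr ⟨hc, h⟩; exact ⟨t.1, Or.inr t.2⟩
  -- event sets
  set Lev : Set E := {e | e ∈ AL.carrier ∧ chan e ∈ LC} with hLevdef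
  set Cev : Set E := {e | e ∈ AL.carrier ∧ chan e ∈ Cut} with hCevdef
  set Rev : Set E := {e | e ∈ AR.carrier ∧ (chan e ∈ Cut ∨ chan e ∉ LC)} with hRevdef
  have hCevR : Cev = {e | e ∈ AR.carrier ∧ chan e ∈ Cut} :=
    congrArg EvStruct.carrier hcut
  have hcutrel : ∀ a b, chan a ∈ Cut → chan b ∈ Cut → (AL.rel a b ↔ AR.rel a b) := by
    intro a b ha hb
    have h := congrFun (congrFun (congrArg EvStruct.rel hcut) a) b
    have h' : (AL.rel a b ∧ chan a ∈ Cut ∧ chan b ∈ Cut) ↔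
        (AR.rel a b ∧ chan a ∈ Cut ∧ chan b ∈ Cut) := iff_of_eq h
    constructor
    · intro hr; exact (h'.mp ⟨hr, ha, hb⟩).1
    · intro hr; exact (h'.mpr ⟨hr, ha, hb⟩).1
  have hLR : ∀ e, e ∈ Lev → e ∈ Rev → e ∈ Cev := by
    rintro e hL hR'
    rcases hR'.2 with h|h
    · exact ⟨hL.1, h⟩
    · exact absurd hL.2 h
  have hCevL : Cev ⊆ Lev := fun e he => ⟨he.1, hCutLC he.2⟩
  have hCevRev : Cev ⊆ Rev := by
    intro e he
    have he' : e ∈ {e | e ∈ AR.carrier ∧ chan e ∈ Cut} := hCevR ▸ he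
    exact ⟨he'.1, Or.inl he'.2⟩
  have hCevR' : ∀ e, e ∈ AR.carrier → chan e ∈ Cut → e ∈ Cev := by
    intro e h1 h2
    rw [hCevR]; exact ⟨h1, h2⟩
  have hCevAR : ∀ e, e ∈ Cev → e ∈ AR.carrier :=
    fun e he => ((Set.ext_iff.mp hCevR e).mp he).1
  set A : EvStruct E := ⟨Lev ∪ Rev, fun a b =>
    (a ∈ Lev ∧ b ∈ Lev ∧ AL.rel a b) ∨
    (a ∈ Rev ∧ b ∈ Rev ∧ AR.rel a b) ∨
    (∃ c, c ∈ Cev ∧ a ∈ Lev ∧ b ∈ Rev ∧ AL.rel a c ∧ AR.rel c b) ∨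
    (∃ c, c ∈ Cev ∧ a ∈ Rev ∧ b ∈ Lev ∧ AR.rel a c ∧ AL.rel c b)⟩ with hAdef
  have hAcar : A.carrier = Lev ∪ Rev := rfl
  have hArel : ∀ a b, A.rel a b ↔
      ((a ∈ Lev ∧ b ∈ Lev ∧ AL.rel a b) ∨
      (a ∈ Rev ∧ b ∈ Rev ∧ AR.rel a b) ∨
      (∃ c, c ∈ Cev ∧ a ∈ Lev ∧ b ∈ Rev ∧ AL.rel a c ∧ AR.rel c b) ∨
      (∃ c, c ∈ Cev ∧ a ∈ Rev ∧ b ∈ Lev ∧ AR.rel a c ∧ AL.rel c b)) :=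
    fun a b => Iff.rfl
  have LtoR : ∀ a b, chan a ∈ Cut → chan b ∈ Cut → AL.rel a b → AR.rel a b :=
    fun a b ha hb h => (hcutrel a b ha hb).mp h
  have RtoL : ∀ a b, chan a ∈ Cut → chan b ∈ Cut → AR.rel a b → AL.rel a b :=
    fun a b ha hb h => (hcutrel a b ha hb).mpr h
  -- characterization of A.rel on each side
  have relL : ∀ a b, a ∈ Lev → b ∈ Lev → (A.rel a b ↔ AL.rel a b) := by
    intro a b ha hb
    rw [hArel]
    constructor
    · rintro (⟨_, _, h⟩ | ⟨ha', hb', h⟩ | ⟨c, hc, _, hb', h1, h2⟩ | ⟨c, hc, ha', _, h1, h2⟩)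
      · exact h
      · exact RtoL a b (hLR a ha ha').2 (hLR b hb hb').2 h
      · exact hLtrans a c b h1 (RtoL c b hc.2 (hLR b hb hb').2 h2)
      · exact hLtrans a c b (RtoL a c (hLR a ha ha').2 hc.2 h1) h2
    · intro h; exact Or.inl ⟨ha, hb, h⟩
  have relR : ∀ a b, a ∈ Rev → b ∈ Rev → (A.rel a b ↔ AR.rel a b) := by
    intro a b ha hb
    rw [hArel]
    constructor
    · rintro (⟨ha', hb', h⟩ | ⟨_, _, h⟩ | ⟨c, hc, ha', _, h1, h2⟩ | ⟨c, hc, _, hb', h1, h2⟩)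
      · exact LtoR a b (hLR a ha' ha).2 (hLR b hb' hb).2 h
      · exact h
      · exact hRtrans a c b (LtoR a c (hLR a ha' ha).2 hc.2 h1) h2
      · exact hRtrans a c b h1 (LtoR c b hc.2 (hLR b hb' hb).2 h2)
    · intro h; exact Or.inr (Or.inl ⟨ha, hb, h⟩)
  -- A is a system of events
  have hsys : IsSysEv A := by
    refine ⟨?_, ?_, ?_, ?_, ?_⟩
    · intro a b hab
      rcases (hArel a b).mp hab with ⟨ha, hb, _⟩ | ⟨ha, hb, _⟩ |
        ⟨c, _, ha, hb, _, _⟩ | ⟨c, _, ha, hb, _, _⟩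
      exacts [⟨Or.inl ha, Or.inl hb⟩, ⟨Or.inr ha, Or.inr hb⟩,
        ⟨Or.inl ha, Or.inr hb⟩, ⟨Or.inr ha, Or.inl hb⟩]
    · rintro a (ha | ha)
      · exact (hArel a a).mpr (Or.inl ⟨ha, ha, hLrefl a ha.1⟩)
      · exact (hArel a a).mpr (Or.inr (Or.inl ⟨ha, ha, hRrefl a ha.1⟩))
    · intro a b hab hba
      by_cases h1 : a ∈ Lev ∧ b ∈ Lev
      · exact hLanti a b ((relL a b h1.1 h1.2).mp hab) ((relL b a h1.2 h1.1).mp hba)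
      by_cases h2 : a ∈ Rev ∧ b ∈ Rev
      · exact hRanti a b ((relR a b h2.1 h2.2).mp hab) ((relR b a h2.2 h2.1).mp hba)
      rcases (hArel a b).mp hab with ⟨ha, hb, _⟩ | ⟨ha, hb, _⟩ |
        ⟨c1, hc1, haL, hbR, hL1, hR1⟩ | ⟨c1, hc1, haR, hbL, hR1, hL1⟩
      · exact absurd ⟨ha, hb⟩ h1
      · exact absurd ⟨ha, hb⟩ h2
      · -- a ∈ Lev, b ∈ Rev; must have a ∉ Rev, b ∉ Lev
        have haR : a ∉ Rev := fun h => h2 ⟨h, hbR⟩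
        have hbL : b ∉ Lev := fun h => h1 ⟨haL, h⟩
        rcases (hArel b a).mp hba with ⟨hb', _, _⟩ | ⟨_, ha', _⟩ |
          ⟨c2, hc2, hb', _, _, _⟩ | ⟨c2, hc2, _, _, hR2, hL2⟩
        · exact absurd hb' hbL
        · exact absurd ha' haR
        · exact absurd hb' hbL
        · -- AL.rel a c1, AR.rel c1 b, AR.rel b c2, AL.rel c2 a
          have h3 : AR.rel c1 c2 := hRtrans c1 b c2 hR1 hR2
          have h4 : AL.rel c1 c2 := RtoL c1 c2 hc1.2 hc2.2 h3
          have h5 : AL.rel c1 a := hLtrans c1 c2 a h4 hL2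
          have h6 : a = c1 := hLanti a c1 hL1 h5
          exact absurd (h6 ▸ hCevRev hc1) haR
      · have haL' : a ∉ Lev := fun h => h1 ⟨h, hbL⟩
        have hbR' : b ∉ Rev := fun h => h2 ⟨haR, h⟩
        rcases (hArel b a).mp hba with ⟨_, ha', _⟩ | ⟨hb', _, _⟩ |
          ⟨c2, hc2, _, _, hL2, hR2⟩ | ⟨c2, hc2, hb', _, _, _⟩
        · exact absurd ha' haL'
        · exact absurd hb' hbR'
        · -- AR.rel a c1, AL.rel c1 b, AL.rel b c2, AR.rel c2 a
          have h3 : AL.rel c1 c2 := hLtrans c1 b c2 hL1 hL2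
          have h4 : AR.rel c1 c2 := LtoR c1 c2 hc1.2 hc2.2 h3
          have h5 : AR.rel c1 a := hRtrans c1 c2 a h4 hR2
          have h6 : a = c1 := hRanti a c1 hR1 h5
          exact absurd (h6 ▸ hCevL hc1) haL'
        · exact absurd hb' hbR'
    · intro a b c hab hbc
      rw [hArel] at hab hbc ⊢
      rcases hab with ⟨ha, hb, h1⟩ | ⟨ha, hb, h1⟩ |
        ⟨d, hd, ha, hb, h1, h2⟩ | ⟨d, hd, ha, hb, h1, h2⟩ <;>
      rcases hbc with ⟨hb', hc, h3⟩ | ⟨hb', hc, h3⟩ |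
        ⟨d', hd', hb', hc, h3, h4⟩ | ⟨d', hd', hb', hc, h3, h4⟩
      · exact Or.inl ⟨ha, hc, hLtrans a b c h1 h3⟩
      · exact Or.inr (Or.inr (Or.inl ⟨b, hLR b hb hb', ha, hc, h1, h3⟩))
      · exact Or.inr (Or.inr (Or.inl ⟨d', hd', ha, hc, hLtrans a b d' h1 h3, h4⟩))
      · have hbc' : AL.rel b d' := RtoL b d' (hLR b hb hb').2 hd'.2 h3
        exact Or.inl ⟨ha, hc, hLtrans a d' c (hLtrans a b d' h1 hbc') h4⟩
      · exact Or.inr (Or.inr (Or.inr ⟨b, hLR b hb' hb, ha, hc, h1, h3⟩))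
      · exact Or.inr (Or.inl ⟨ha, hc, hRtrans a b c h1 h3⟩)
      · have hbd : AR.rel b d' := LtoR b d' (hLR b hb' hb).2 hd'.2 h3
        exact Or.inr (Or.inl ⟨ha, hc, hRtrans a d' c (hRtrans a b d' h1 hbd) h4⟩)
      · exact Or.inr (Or.inr (Or.inr ⟨d', hd', ha, hc, hRtrans a b d' h1 h3, h4⟩))
      · have hdb : AL.rel d b := RtoL d b hd.2 (hLR b hb' hb).2 h2
        exact Or.inl ⟨ha, hc, hLtrans a b c (hLtrans a d b h1 hdb) h3⟩
      · exact Or.inr (Or.inr (Or.inl ⟨d, hd, ha, hc, h1, hRtrans d b c h2 h3⟩))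
      · have hbd : AR.rel b d' := LtoR b d' (hLR b hb' hb).2 hd'.2 h3
        exact Or.inr (Or.inr (Or.inl ⟨d, hd, ha, hc, h1,
          hRtrans d d' c (hRtrans d b d' h2 hbd) h4⟩))
      · have hdd : AL.rel d d' := RtoL d d' hd.2 hd'.2 (hRtrans d b d' h2 h3)
        exact Or.inl ⟨ha, hc, hLtrans a d' c (hLtrans a d d' h1 hdd) h4⟩
      · exact Or.inr (Or.inr (Or.inr ⟨d, hd, ha, hc, h1, hLtrans d b c h2 h3⟩))
      · have hdb : AR.rel d b := LtoR d b hd.2 (hLR b hb hb').2 h2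
        exact Or.inr (Or.inl ⟨ha, hc, hRtrans a b c (hRtrans a d b h1 hdb) h3⟩)
      · have hdd : AR.rel d d' := LtoR d d' hd.2 hd'.2 (hLtrans d b d' h2 h3)
        exact Or.inr (Or.inl ⟨ha, hc, hRtrans a d' c (hRtrans a d d' h1 hdd) h4⟩)
      · have hdb : AR.rel d b := LtoR d b hd.2 (hLR b hb hb').2 h2
        exact Or.inr (Or.inr (Or.inr ⟨d', hd', ha, hc,
          hRtrans a b d' (hRtrans a d b h1 hdb) h3, h4⟩))
    · -- finitely many predecessors
      have hLfin' : ∀ a, {x | AL.rel x a}.Finite := by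
        intro a
        by_cases h : a ∈ AL.carrier
        · exact hLfin a h
        · have : {x | AL.rel x a} = ∅ := by
            ext x; simp only [Set.mem_setOf_eq, Set.mem_empty_iff_false, iff_false]
            exact fun hx => h (hLcar x a hx).2
          rw [this]; exact Set.finite_empty
      have hRfin' : ∀ a, {x | AR.rel x a}.Finite := by
        intro a
        by_cases h : a ∈ AR.carrier
        · exact hRfin a h
        · have : {x | AR.rel x a} = ∅ := by
            ext x; simp only [Set.mem_setOf_eq, Set.mem_empty_iff_false, iff_false]
            exact fun hx => h (hRcar x a hx).2
          rw [this]; exact Set.finite_empty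
      intro a _
      have hsub : {x | A.rel x a} ⊆ ({x | AL.rel x a} ∪ {x | AR.rel x a}) ∪
          ((⋃ c ∈ {x | AR.rel x a}, {x | AL.rel x c}) ∪
           (⋃ c ∈ {x | AL.rel x a}, {x | AR.rel x c})) := by
        intro x hx
        rcases (hArel x a).mp hx with ⟨_, _, h⟩ | ⟨_, _, h⟩ |
          ⟨c, _, _, _, h1, h2⟩ | ⟨c, _, _, _, h1, h2⟩
        · exact Or.inl (Or.inl h)
        · exact Or.inl (Or.inr h)
        · exact Or.inr (Or.inl (Set.mem_biUnion h2 h1))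
        · exact Or.inr (Or.inr (Set.mem_biUnion h2 h1))
      exact Set.Finite.subset
        (Set.Finite.union ((hLfin' a).union (hRfin' a))
          (Set.Finite.union ((hRfin' a).biUnion fun c _ => hLfin' c)
            ((hLfin' a).biUnion fun c _ => hRfin' c))) hsub
  -- channels of A lie in Fb.CH
  have hchan : ∀ e ∈ A.carrier, chan e ∈ Fb.CH := by
    rintro e (he | he)
    · exact ((hLC_b (chan e)).mp he.2).1
    · exact hARch e he.1
  -- key: cut-or-left chars with an Fb-endpoint outside L0 are cut channels
  have hLCcut : ∀ ℓ, ℓ ∉ L0 → ∀ c, c ∈ LC →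
      (Fb.sender c = ℓ ∨ Fb.recipt c = ℓ) → c ∈ Cut := by
    intro ℓ hℓ0 c hc hend'
    have hcontra : ¬(Fa.sender c ∈ L0 ∧ Fa.recipt c ∈ L0) := by
      rintro ⟨hs', hr'⟩
      obtain ⟨hcb, hs2⟩ := shared_sender' hsh hc.1 hs'
      obtain ⟨_, hr2⟩ := shared_recipt' hsh hc.1 hr'
      rcases hend' with h' | h'
      · exact hℓ0 (by rw [← h', hs2]; exact hs')
      · exact hℓ0 (by rw [← h', hr2]; exact hr')
    refine ⟨hc.1, ?_⟩
    rcases hc.2 with hs | hr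
    · exact Or.inl ⟨hs, fun hr => hcontra ⟨hs, hr⟩⟩
    · exact Or.inr ⟨hr, fun hs => hcontra ⟨hs, hr⟩⟩
  -- locations
  have hloc : ∀ ℓ ∈ Fb.LO,
      (∀ a ∈ evProj Fb chan A ℓ, ∀ b ∈ evProj Fb chan A ℓ, A.rel a b ∨ A.rel b a) ∧
      projSeq Fb chan msg A ℓ ∈ Fb.traces ℓ := by
    intro ℓ hℓ
    by_cases hℓ0 : ℓ ∈ L0
    · -- shared location: agrees with AL
      have hmemL : ∀ e ∈ evProj Fb chan A ℓ, e ∈ Lev := by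
        rintro e ⟨he, hend'⟩
        have hch : chan e ∈ Fb.CH := hchan e he
        have hLCe : chan e ∈ LC := (hLC_b (chan e)).mpr
          ⟨hch, by rcases hend' with h | h; exacts [Or.inl (h ▸ hℓ0), Or.inr (h ▸ hℓ0)]⟩
        rcases he with h | h
        · exact h
        · rcases h.2 with hcut' | hnot
          · exact hCevL (hCevR' e h.1 hcut')
          · exact absurd hLCe hnot
      have hproj : evProj Fb chan A ℓ = evProj Fa chan AL ℓ := by
        ext e
        constructor
        · intro he
          have heL := hmemL e he
          have hFa := (hend ℓ hℓ0 (chan e)).mpr ⟨hchan e he.1, he.2⟩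
          exact ⟨heL.1, hFa.2⟩
        · rintro ⟨he, hend'⟩
          have hch : chan e ∈ Fa.CH := hALch e he
          have hFb := (hend ℓ hℓ0 (chan e)).mp ⟨hch, hend'⟩
          have heL : e ∈ Lev := ⟨he, hch,
            by rcases hend' with h | h; exacts [Or.inl (h ▸ hℓ0), Or.inr (h ▸ hℓ0)]⟩
          exact ⟨Or.inl heL, hFb.2⟩
      have hrelp : ∀ a ∈ evProj Fb chan A ℓ, ∀ b ∈ evProj Fb chan A ℓ,
          (A.rel a b ↔ AL.rel a b) :=
        fun a ha b hb => relL a b (hmemL a ha) (hmemL b hb)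
      constructor
      · intro a ha b hb
        rcases (hALloc ℓ (hsh.1 hℓ0)).1 a (hproj ▸ ha) b (hproj ▸ hb) with h | h
        · exact Or.inl ((hrelp a ha b hb).mpr h)
        · exact Or.inr ((hrelp b hb a ha).mpr h)
      · rw [projSeq_congr chan msg hproj hrelp, ← (hsh.2.2 ℓ hℓ0).2.2]
        exact (hALloc ℓ (hsh.1 hℓ0)).2
    · -- non-shared location: agrees with AR
      have hmemR : ∀ e ∈ evProj Fb chan A ℓ, e ∈ Rev := by
        rintro e ⟨he, hend'⟩
        rcases he with h | h
        · have hcute : chan e ∈ Cut := hLCcut ℓ hℓ0 (chan e) h.2 hend'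
          exact hCevRev ⟨h.1, hcute⟩
        · exact h
      have hproj : evProj Fb chan A ℓ = evProj Fb chan AR ℓ := by
        ext e
        constructor
        · intro he
          exact ⟨(hmemR e he).1, he.2⟩
        · rintro ⟨he, hend'⟩
          have hch := hARch e he
          have heR : e ∈ Rev := by
            refine ⟨he, ?_⟩
            by_cases hLCe : chan e ∈ LC
            · exact Or.inl (hLCcut ℓ hℓ0 (chan e) hLCe hend')
            · exact Or.inr hLCe
          exact ⟨Or.inr heR, hend'⟩
      have hrelp : ∀ a ∈ evProj Fb chan A ℓ, ∀ b ∈ evProj Fb chan A ℓ,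
          (A.rel a b ↔ AR.rel a b) :=
        fun a ha b hb => relR a b (hmemR a ha) (hmemR b hb)
      constructor
      · intro a ha b hb
        rcases (hARloc ℓ hℓ).1 a (hproj ▸ ha) b (hproj ▸ hb) with h | h
        · exact Or.inl ((hrelp a ha b hb).mpr h)
        · exact Or.inr ((hrelp b hb a ha).mpr h)
      · rw [projSeq_congr chan msg hproj hrelp]
        exact (hARloc ℓ hℓ).2
  refine ⟨A, ⟨hsys, hchan, hloc⟩, ?_, ?_, ?_⟩
  · -- restriction to the cut agrees with AR
    refine evstruct_ext ?_ ?_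
    · ext e
      simp only [evRestrict, Set.mem_setOf_eq, hAcar]
      constructor
      · rintro ⟨he | he, hc⟩
        · exact ⟨hCevAR e ⟨he.1, hc⟩, hc⟩
        · exact ⟨he.1, hc⟩
      · rintro ⟨he, hc⟩
        exact ⟨Or.inr (hCevRev (hCevR' e he hc)), hc⟩
    · funext a b
      apply propext
      simp only [evRestrict]
      constructor
      · rintro ⟨hab, hca, hcb⟩
        refine ⟨?_, hca, hcb⟩
        rcases (hArel a b).mp hab with ⟨ha, hb, h⟩ | ⟨_, _, h⟩ |
          ⟨c, hc, ha, _, h1, h2⟩ | ⟨c, hc, _, hb, h1, h2⟩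
        · exact LtoR a b hca hcb h
        · exact h
        · exact hRtrans a c b (LtoR a c hca hc.2 h1) h2
        · exact hRtrans a c b h1 (LtoR c b hc.2 hcb h2)
      · rintro ⟨hab, hca, hcb⟩
        have ha := hCevRev (hCevR' a (hRcar a b hab).1 hca)
        have hb := hCevRev (hCevR' b (hRcar a b hab).2 hcb)
        exact ⟨(hArel a b).mpr (Or.inr (Or.inl ⟨ha, hb, hab⟩)), hca, hcb⟩
  · -- restriction to left channels agrees with AL
    intro C hC
    have hCL : C ⊆ LC := fun c hc => by
      obtain ⟨h1, h2, h3⟩ := hC hc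
      exact ⟨h1, Or.inl h2⟩
    have hCnotR : ∀ c ∈ C, c ∉ Cut := by
      intro c hc hcut'
      obtain ⟨h1, h2, h3⟩ := hC hc
      rcases hcut'.2 with ⟨_, h⟩ | ⟨_, h⟩
      · exact h h3
      · exact h h2
    refine evstruct_ext ?_ ?_
    · ext e
      simp only [evRestrict, Set.mem_setOf_eq, hAcar]
      constructor
      · rintro ⟨he | he, hc⟩
        · exact ⟨he.1, hc⟩
        · rcases he.2 with h | h
          · exact absurd h (hCnotR (chan e) hc)
          · exact absurd (hCL hc) h
      · rintro ⟨he, hc⟩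
        exact ⟨Or.inl ⟨he, hCL hc⟩, hc⟩
    · funext a b
      apply propext
      simp only [evRestrict]
      constructor
      · rintro ⟨hab, hca, hcb⟩
        refine ⟨?_, hca, hcb⟩
        rcases (hArel a b).mp hab with ⟨_, _, h⟩ | ⟨ha, hb, h⟩ |
          ⟨c, hc, _, hb, h1, h2⟩ | ⟨c, hc, ha, _, h1, h2⟩
        · exact h
        · rcases ha.2 with h' | h'
          · exact absurd h' (hCnotR (chan a) hca)
          · exact absurd (hCL hca) h'
        · rcases hb.2 with h' | h'
          · exact absurd h' (hCnotR (chan b) hcb)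
          · exact absurd (hCL hcb) h'
        · rcases ha.2 with h' | h'
          · exact absurd h' (hCnotR (chan a) hca)
          · exact absurd (hCL hca) h'
      · rintro ⟨hab, hca, hcb⟩
        have ha : a ∈ Lev := ⟨(hLcar a b hab).1, hCL hca⟩
        have hb : b ∈ Lev := ⟨(hLcar a b hab).2, hCL hcb⟩
        exact ⟨(hArel a b).mpr (Or.inl ⟨ha, hb, hab⟩), hca, hcb⟩
  · -- restriction to right channels agrees with AR
    intro C hC
    have hCnotLC : ∀ c ∈ C, c ∉ LC := by
      intro c hc hLCc
      obtain ⟨h1, h2, h3⟩ := hC hc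
      rcases ((hLC_b c).mp hLCc).2 with h | h
      · exact h2 h
      · exact h3 h
    refine evstruct_ext ?_ ?_
    · ext e
      simp only [evRestrict, Set.mem_setOf_eq, hAcar]
      constructor
      · rintro ⟨he | he, hc⟩
        · exact absurd he.2 (hCnotLC (chan e) hc)
        · exact ⟨he.1, hc⟩
      · rintro ⟨he, hc⟩
        exact ⟨Or.inr ⟨he, Or.inr (hCnotLC (chan e) hc)⟩, hc⟩
    · funext a b
      apply propext
      simp only [evRestrict]
      constructor
      · rintro ⟨hab, hca, hcb⟩
        refine ⟨?_, hca, hcb⟩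
        rcases (hArel a b).mp hab with ⟨ha, _, h⟩ | ⟨_, _, h⟩ |
          ⟨c, hc, ha, _, h1, h2⟩ | ⟨c, hc, _, hb, h1, h2⟩
        · exact absurd ha.2 (hCnotLC (chan a) hca)
        · exact h
        · exact absurd ha.2 (hCnotLC (chan a) hca)
        · exact absurd hb.2 (hCnotLC (chan b) hcb)
      · rintro ⟨hab, hca, hcb⟩
        have ha : a ∈ Rev := ⟨(hRcar a b hab).1, Or.inr (hCnotLC (chan a) hca)⟩
        have hb : b ∈ Rev := ⟨(hRcar a b hab).2, Or.inr (hCnotLC (chan b) hcb)⟩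
        exact ⟨(hArel a b).mpr (Or.inr (Or.inl ⟨ha, hb, hab⟩)), hca, hcb⟩

end CutBlurAux

/-- compositional cut-blur principle: if `L0` is shared between
`F1` and `F2`, every `lcut0`-run of `F2` is an `lcut0`-run of `F1`,
`lsrc ⊆ LEFT0`, `lobs ⊆ RIGHT2`, and `F1` `f`-limits `lsrc`-to-`lcut0` flow,
then `F2` `f`-limits `lsrc`-to-`lobs` flow. -/
theorem compositional_cut_blur (F1 F2 : Frame Loc Chan D)
    (chan : E → Chan) (msg : E → D)
    (L0 : Set Loc) (hsh : Shared F1 F2 L0)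
    (hcutruns : lruns F2 chan msg (lcut0 F1 L0) ⊆ lruns F1 chan msg (lcut0 F1 L0))
    (lsrc lobs : Set Chan)
    (hsrc : lsrc ⊆ LEFT0 F1 L0) (hobs : lobs ⊆ RIGHTchans F2 L0)
    (f : Set (EvStruct E) → Set (EvStruct E))
    (h1 : FLimits F1 chan msg lsrc (lcut0 F1 L0) f) :
    FLimits F2 chan msg lsrc lobs f := by
  obtain ⟨hblur, hlim⟩ := h1
  refine ⟨hblur, fun B hB => ?_⟩
  have hcc : lcut0 F1 L0 = lcut0 F2 L0 := lcut0_shared_eq hsh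
  have hll : LEFT0 F1 L0 = LEFT0 F2 L0 := LEFT0_shared_eq hsh
  have key : cmpt F2 chan msg lobs lsrc B =
      ⋃ (i : {A : EvStruct E // IsExec F2 chan msg A ∧ evRestrict chan A lobs = B}),
        cmpt F1 chan msg (lcut0 F1 L0) lsrc (evRestrict chan i.1 (lcut0 F1 L0)) := by
    ext B'
    simp only [Set.mem_iUnion]
    constructor
    · rintro ⟨A, hA, hAobs, hAsrc⟩
      obtain ⟨A₂, hA₂, hA₂cut⟩ := hcutruns ⟨A, hA, rfl⟩
      obtain ⟨A₁, hA₁, hA₁cut, hA₁left, -⟩ :=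
        splice F2 F1 chan msg L0 (shared_symm hsh) A A₂ hA hA₂
          (by rw [← hcc]; exact hA₂cut.symm)
      refine ⟨⟨A, hA, hAobs⟩, A₁, hA₁, ?_, ?_⟩
      · rw [hcc, hA₁cut, ← hcc, hA₂cut]
      · rw [hA₁left lsrc (hll ▸ hsrc), hAsrc]
    · rintro ⟨⟨A, hA, hAobs⟩, A', hA', hA'cut, hA'src⟩
      obtain ⟨A'', hA'', -, hleft, hright⟩ :=
        splice F1 F2 chan msg L0 hsh A' A hA' hA hA'cut
      exact ⟨A'', hA'', by rw [hright lobs hobs, hAobs], by rw [hleft lsrc hsrc, hA'src]⟩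
  rw [key, hblur.2.2]
  refine Set.iUnion_congr fun i => ?_
  exact hlim _ (hcutruns ⟨i.1, i.2.1, rfl⟩)
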